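/- arXiv:1801.02066 — 2 statements merged into one kernel-verified Lean document; each statement's English description precedes it below -/
import Mathlib

section
/- Given positive integers d_1,...,d_n with Σ d_i even, consider the instance of P0 with n blocks, two services k_ell and k_c, rates r_{b,k_ell} = r_{b,k_c} = d_b for all b, demand q_{k_ell} = (Σ d_i)/2, and each block consisting of a distinct single basic unit. Then there exists a partition of {1,...,n} into two subsets each summing to (Σ d_i)/2 if and only if this instance of P0 has a feasible solution with objective value at least (Σ d_i)/2. -/
/-!
A partition `T` is the assignment sending the blocks of `T` to `k_ell` and the rest to `k_c`;
both services then earn exactly half the total. Conversely, in a feasible solution of value at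
least half the total, each block serves at most one service, so the two revenues add up to at
most the total while each is at least half of it: both are exactly half, and the blocks
assigned to `k_ell` form a partition.
-/

open Finset

section PartitionReduction

variable {ι : Type*} [Fintype ι]

theorem sum_mul_eq_sum_filter_of_le_one (d x : ι → ℕ) (hx : ∀ b, x b ≤ 1) :
    ∑ b, d b * x b = ∑ b ∈ univ.filter (x · = 1), d b := by
  rw [sum_filter]
  refine sum_congr rfl fun b _ => ?_
  rcases Nat.le_one_iff_eq_zero_or_eq_one.mp (hx b) with hb | hb <;> simp [hb]

theorem sum_mul_add_sum_mul_le (d x y : ι → ℕ) (hxy : ∀ b, x b + y b ≤ 1) :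
    ∑ b, d b * x b + ∑ b, d b * y b ≤ ∑ b, d b := by
  rw [← sum_add_distrib]
  refine sum_le_sum fun b _ => ?_
  calc d b * x b + d b * y b = d b * (x b + y b) := (mul_add ..).symm
    _ ≤ d b * 1 := Nat.mul_le_mul_left _ (hxy b)
    _ = d b := mul_one _

theorem two_mul_sum_filter_eq_of_feasible (d : ι → ℕ) (x : ι → Bool → ℕ)
    (hx : ∀ b k, x b k ≤ 1) (hell : ∑ i, d i ≤ 2 * ∑ b, d b * x b true)
    (hunit : ∀ i, x i true + x i false ≤ 1) (hc : ∑ i, d i ≤ 2 * ∑ b, d b * x b false) :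
    2 * ∑ i ∈ univ.filter (x · true = 1), d i = ∑ i, d i := by
  have hsum := sum_mul_add_sum_mul_le d (x · true) (x · false) hunit
  rw [← sum_mul_eq_sum_filter_of_le_one d (x · true) (hx · true)]
  omega

variable [DecidableEq ι]

theorem sum_unit_constraint_eq (x : ι → Bool → ℕ) (i : ι) :
    ∑ k : Bool, ∑ b, (if b = i then 1 else 0) * x b k = x i true + x i false := by
  simp

def partitionAssignment (T : Finset ι) (b : ι) (k : Bool) : ℕ :=
  if b ∈ cond k T Tᶜ then 1 else 0

theorem partitionAssignment_le_one (T : Finset ι) (b : ι) (k : Bool) :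
    partitionAssignment T b k ≤ 1 := by
  unfold partitionAssignment
  split <;> simp

theorem partitionAssignment_true_add_false (T : Finset ι) (b : ι) :
    partitionAssignment T b true + partitionAssignment T b false = 1 := by
  by_cases hb : b ∈ T <;> simp [partitionAssignment, hb]

theorem sum_mul_partitionAssignment (d : ι → ℕ) (T : Finset ι) (k : Bool) :
    ∑ b, d b * partitionAssignment T b k = ∑ b ∈ cond k T Tᶜ, d b := by
  simp [partitionAssignment, sum_ite_mem]

theorem two_mul_sum_compl_eq {d : ι → ℕ} {T : Finset ι} (hT : 2 * ∑ i ∈ T, d i = ∑ i, d i) :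
    2 * ∑ i ∈ Tᶜ, d i = ∑ i, d i := by
  have := sum_add_sum_compl T d
  omega

end PartitionReduction

theorem partition_reduction_general (n : ℕ) (d : Fin n → ℕ) :
    (∃ T : Finset (Fin n), 2 * ∑ i ∈ T, d i = ∑ i, d i) ↔
    (∃ x : Fin n → Bool → ℕ,
      (∀ b k, x b k ≤ 1) ∧
      (∑ i, d i ≤ 2 * ∑ b, d b * x b true) ∧
      (∀ i : Fin n, ∑ k : Bool, ∑ b, (if b = i then 1 else 0) * x b k ≤ 1) ∧
      (∑ i, d i ≤ 2 * ∑ b, d b * x b false)) := by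
  simp only [sum_unit_constraint_eq]
  constructor
  · rintro ⟨T, hT⟩
    refine ⟨partitionAssignment T, partitionAssignment_le_one T, ?_,
      fun i => (partitionAssignment_true_add_false T i).le, ?_⟩
    · rw [sum_mul_partitionAssignment]
      exact hT.ge
    · rw [sum_mul_partitionAssignment]
      exact (two_mul_sum_compl_eq hT).ge
  · rintro ⟨x, hx, hell, hunit, hc⟩
    exact ⟨_, two_mul_sum_filter_eq_of_feasible d x hx hell hunit hc⟩

/-- Partition reduction instance of P0: `n` blocks, each consisting of a
distinct single basic unit (so `a b i = if b = i then 1 else 0`), two services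
(k_ell = `true`, k_c = `false`) with rates `r b k = d b`, and demand
`q = (∑ d i)/2` for k_ell.  There exists an equal-sum partition of
`{1,…,n}` iff this P0 instance has a feasible solution with objective value at
least `(∑ d i)/2`.  (All inequalities with `(∑ d i)/2` are stated multiplied
by 2 to stay in ℕ.) -/
theorem partition_reduction (n : ℕ) (d : Fin n → ℕ) (heven : Even (∑ i, d i)) :
    (∃ T : Finset (Fin n), 2 * ∑ i ∈ T, d i = ∑ i, d i) ↔
    (∃ x : Fin n → Bool → ℕ,
      (∀ b k, x b k ≤ 1) ∧
      (∑ i, d i ≤ 2 * ∑ b, d b * x b true) ∧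
      (∀ i : Fin n, ∑ k : Bool, ∑ b, (if b = i then 1 else 0) * x b k ≤ 1) ∧
      (∑ i, d i ≤ 2 * ∑ b, d b * x b false)) :=
  partition_reduction_general n d
end

section
/- In the Partition reduction instance of P0, any feasible solution satisfies objective value ≤ (Σ_{i=1}^n d_i)/2, with equality attainable exactly when the multiset {d_1,...,d_n} admits an equal-sum partition. -/
/-!
Each block is given to at most one service, so the `k_c` objective plus the `k_ell` load is at
most `∑ d`, while the demand forces the `k_ell` load up to `∑ d / 2`. At equality the blocks
given to `k_c` form one half of an equal-sum partition; conversely such a half `T`, served by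
`k_c` with its complement served by `k_ell`, is a feasible solution attaining the bound.
-/

open Finset

namespace PartitionInstance

variable {ι : Type*} [Fintype ι] (d : ι → ℕ)

theorem sum_mul_add_sum_mul_le_sum {x y : ι → ℕ} (h : ∀ b, x b + y b ≤ 1) :
    ∑ b, d b * x b + ∑ b, d b * y b ≤ ∑ b, d b := by
  rw [← sum_add_distrib]
  refine sum_le_sum fun b _ => ?_
  calc d b * x b + d b * y b = d b * (x b + y b) := (mul_add ..).symm
    _ ≤ d b * 1 := Nat.mul_le_mul_left _ (h b)
    _ = d b := mul_one _

theorem sum_mul_eq_sum_filter_eq_one {x : ι → ℕ} (h : ∀ b, x b ≤ 1) :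
    ∑ b, d b * x b = ∑ b ∈ univ.filter (x · = 1), d b := by
  rw [sum_filter]
  refine sum_congr rfl fun b _ => ?_
  rcases Nat.le_one_iff_eq_zero_or_eq_one.mp (h b) with hb | hb <;> simp [hb]

theorem sum_mul_boole_mem [DecidableEq ι] (S : Finset ι) :
    ∑ b, d b * (if b ∈ S then 1 else 0) = ∑ b ∈ S, d b := by
  simp only [mul_boole, sum_ite_mem, univ_inter]

/-- Feasibility in the Partition instance, with `true` the service `k_ell` and `false` the
service `k_c`; the demand constraint is multiplied by 2 to avoid halving. -/
def Feasible (x : ι → Bool → ℕ) : Prop :=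
  (∀ b k, x b k ≤ 1) ∧ (∑ i, d i ≤ 2 * ∑ b, d b * x b true) ∧ ∀ b, x b true + x b false ≤ 1

variable {d}

theorem Feasible.two_mul_objective_le {x : ι → Bool → ℕ} (hx : Feasible d x) :
    2 * ∑ b, d b * x b false ≤ ∑ i, d i := by
  have hshare := sum_mul_add_sum_mul_le_sum d hx.2.2
  have hdemand := hx.2.1
  omega

theorem Feasible.exists_partition {x : ι → Bool → ℕ} (hx : Feasible d x)
    (hopt : 2 * ∑ b, d b * x b false = ∑ i, d i) :
    ∃ T : Finset ι, 2 * ∑ i ∈ T, d i = ∑ i, d i :=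
  ⟨univ.filter (x · false = 1), sum_mul_eq_sum_filter_eq_one d (hx.1 · false) ▸ hopt⟩

variable [DecidableEq ι]

def ofPartition (T : Finset ι) (b : ι) (k : Bool) : ℕ :=
  if b ∈ (if k then Tᶜ else T) then 1 else 0

theorem feasible_ofPartition {T : Finset ι} (hT : 2 * ∑ i ∈ T, d i = ∑ i, d i) :
    Feasible d (ofPartition T) := by
  refine ⟨fun b k => ?_, ?_, fun b => ?_⟩
  · unfold ofPartition; split_ifs <;> simp
  · have hsplit := sum_compl_add_sum T d
    simp only [ofPartition, if_true, sum_mul_boole_mem]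
    omega
  · by_cases hb : b ∈ T <;> simp [ofPartition, hb]

theorem objective_ofPartition (T : Finset ι) :
    ∑ b, d b * ofPartition T b false = ∑ i ∈ T, d i :=
  sum_mul_boole_mem d T

end PartitionInstance

open PartitionInstance in
theorem partition_instance_bound_general (n : ℕ) (d : Fin n → ℕ) :
    (∀ x : Fin n → Bool → ℕ,
      (∀ b k, x b k ≤ 1) →
      (∑ i, d i ≤ 2 * ∑ b, d b * x b true) →
      (∀ b, x b true + x b false ≤ 1) →
      2 * ∑ b, d b * x b false ≤ ∑ i, d i) ∧
    ((∃ x : Fin n → Bool → ℕ,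
        (∀ b k, x b k ≤ 1) ∧
        (∑ i, d i ≤ 2 * ∑ b, d b * x b true) ∧
        (∀ b, x b true + x b false ≤ 1) ∧
        2 * ∑ b, d b * x b false = ∑ i, d i) ↔
      ∃ T : Finset (Fin n), 2 * ∑ i ∈ T, d i = ∑ i, d i) := by
  refine ⟨fun x h1 h2 h3 => Feasible.two_mul_objective_le ⟨h1, h2, h3⟩, ?_, ?_⟩
  · rintro ⟨x, h1, h2, h3, hopt⟩
    exact Feasible.exists_partition ⟨h1, h2, h3⟩ hopt
  · rintro ⟨T, hT⟩
    obtain ⟨h1, h2, h3⟩ := feasible_ofPartition hT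
    exact ⟨ofPartition T, h1, h2, h3, objective_ofPartition T ▸ hT⟩

/-- In the Partition-reduction instance of P0 (n blocks each a distinct single
basic unit, services k_ell = `true` and k_c = `false`, rates `d b`, demand
`(∑ d)/2`), every feasible solution has objective value at most `(∑ d)/2`,
and a feasible solution attaining `(∑ d)/2` exists iff `{d_1,…,d_n}` admits
an equal-sum partition.  (Inequalities with `(∑ d)/2` are multiplied by 2.) -/
theorem partition_instance_bound (n : ℕ) (d : Fin n → ℕ) (hpos : ∀ i, 0 < d i)
    (heven : Even (∑ i, d i)) :
    (∀ x : Fin n → Bool → ℕ,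
      (∀ b k, x b k ≤ 1) →
      (∑ i, d i ≤ 2 * ∑ b, d b * x b true) →
      (∀ b, x b true + x b false ≤ 1) →
      2 * ∑ b, d b * x b false ≤ ∑ i, d i) ∧
    ((∃ x : Fin n → Bool → ℕ,
        (∀ b k, x b k ≤ 1) ∧
        (∑ i, d i ≤ 2 * ∑ b, d b * x b true) ∧
        (∀ b, x b true + x b false ≤ 1) ∧
        2 * ∑ b, d b * x b false = ∑ i, d i) ↔
      ∃ T : Finset (Fin n), 2 * ∑ i ∈ T, d i = ∑ i, d i) :=
  partition_instance_bound_general n d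
end
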